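/- arXiv:math/0403416 — 2 statements merged into one kernel-verified Lean document; each statement's English description precedes it below -/
import Mathlib

section
/- For all a ≠ b in {1,…,N} and every λ ∈ Ω, the End(V)-valued function λ ↦ ρ(L_a(z;λ)) is differentiable in λ_b on Ω, and the λ-derivative terms arising in the commutator of the dynamical operators cancel: λ_b · ∂/∂λ_b ρ(L_a(z;λ)) = λ_a · ∂/∂λ_a ρ(L_b(z;λ)); explicitly, both sides equal −λ_a λ_b (λ_a−λ_b)^{−2} ρ(E_{a,b}E_{b,a} − E_{a,a}) = −λ_a λ_b (λ_a−λ_b)^{−2} ρ(E_{b,a}E_{a,b} − E_{b,b}). -/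
open scoped TensorProduct

attribute [local instance 100] LieRing.ofAssociativeRing

noncomputable section

/-- The Lie algebra `gl_N` of `N×N` complex matrices. -/
abbrev gl (N : ℕ) := Matrix (Fin N) (Fin N) ℂ

/-- Its universal enveloping algebra `U = U(gl_N)` over `ℂ`. -/
abbrev UEA (N : ℕ) := UniversalEnvelopingAlgebra ℂ (gl N)

/-- `A = U ⊗ ⋯ ⊗ U` (`n` factors). -/
abbrev Atp (N n : ℕ) := ⨂[ℂ] (_ : Fin n), UEA N

/-- `e^{(i)}_{a,b}`: the matrix unit `e_{a,b}` placed in the `i`-th tensor factor. -/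
def eF {N n : ℕ} (i : Fin n) (a b : Fin N) : Atp N n :=
  PiTensorProduct.singleAlgHom i
    (UniversalEnvelopingAlgebra.ι ℂ (Matrix.single a b (1 : ℂ)))

/-- `E_{a,b} = Σ_i e^{(i)}_{a,b}`. -/
def EF {N n : ℕ} (a b : Fin N) : Atp N n := ∑ i, eF i a b

/-- The coefficient `L_a(z;λ)` of the dynamical operator `D_a`. -/
def LF {N n : ℕ} (z : Fin n → ℂ) (lam : Fin N → ℂ) (a : Fin N) : Atp N n :=
  (2⁻¹ : ℂ) • (EF a a) ^ 2
  - ∑ i, z i • eF i a a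
  - ∑ b : Fin N, ∑ i : Fin n, ∑ j : Fin n, (if i < j then eF i a b * eF j b a else 0)
  - ∑ b ∈ Finset.univ.erase a, (lam b / (lam a - lam b)) • (EF a b * EF b a - EF a a)

/-- `Ω = {λ ∈ ℂ^N : λ_1,…,λ_N nonzero and pairwise distinct}`. -/
def Om (N : ℕ) : Set (Fin N → ℂ) :=
  {lam | (∀ a, lam a ≠ 0) ∧ Function.Injective lam}

/-!
The parameter `λ_b` enters `L_a` only through the term `-(λ_b / (λ_a - λ_b)) (E_ab E_ba - E_aa)`,
whose `λ_b`-derivative is `-(λ_a / (λ_a - λ_b)^2) (E_ab E_ba - E_aa)`; symmetrically for `L_b`.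
After multiplying by `λ_b`, resp. `λ_a`, both scalars become `-λ_a λ_b / (λ_a - λ_b)^2`, and the
operators agree because `[E_ab, E_ba] = E_aa - E_bb`, which follows from the relation in each
tensor factor since matrix units in different factors commute.
-/

section CommutatorOfSums

variable {R : Type*} [Ring R] {ι : Type*} [Fintype ι]

theorem Finset.sum_mul_sum_sub_sum_mul_sum_of_commute {x y : ι → R}
    (hxy : ∀ i j, i ≠ j → Commute (x i) (y j)) :
    (∑ i, x i) * (∑ j, y j) - (∑ j, y j) * (∑ i, x i) = ∑ i, (x i * y i - y i * x i) := by
  rw [Finset.sum_mul_sum, Finset.sum_mul_sum, Finset.sum_comm (f := fun j i => y j * x i),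
    ← Finset.sum_sub_distrib]
  refine Finset.sum_congr rfl fun i _ => ?_
  rw [← Finset.sum_sub_distrib, Finset.sum_eq_single i]
  · intro j _ hji
    rw [(hxy i j hji.symm).eq, sub_self]
  · exact fun h => absurd (Finset.mem_univ i) h

end CommutatorOfSums

section Commutators

variable {N n : ℕ}

theorem eF_commute_of_ne {i j : Fin n} (h : i ≠ j) (a b c d : Fin N) :
    Commute (eF i a b) (eF (n := n) j c d) := by
  simp only [eF, PiTensorProduct.singleAlgHom_apply]
  exact Commute.tprod (Pi.mulSingle_commute h _ _)

theorem ι_single_mul_sub_mul (a b : Fin N) :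
    UniversalEnvelopingAlgebra.ι ℂ (Matrix.single a b (1 : ℂ))
        * UniversalEnvelopingAlgebra.ι ℂ (Matrix.single b a 1)
      - UniversalEnvelopingAlgebra.ι ℂ (Matrix.single b a 1)
        * UniversalEnvelopingAlgebra.ι ℂ (Matrix.single a b 1)
      = UniversalEnvelopingAlgebra.ι ℂ (Matrix.single a a 1)
        - UniversalEnvelopingAlgebra.ι ℂ (Matrix.single b b 1) := by
  rw [← Ring.lie_def, ← LieHom.map_lie, Ring.lie_def, Matrix.single_mul_single_same,
    Matrix.single_mul_single_same, one_mul, map_sub]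

theorem eF_mul_sub_mul (i : Fin n) (a b : Fin N) :
    eF i a b * eF i b a - eF i b a * eF i a b = eF i a a - eF i b b := by
  simp only [eF, ← map_mul, ← map_sub, ι_single_mul_sub_mul]

theorem EF_mul_sub_mul (a b : Fin N) :
    EF (n := n) a b * EF b a - EF b a * EF a b = EF a a - EF b b := by
  rw [EF, EF, Finset.sum_mul_sum_sub_sum_mul_sum_of_commute
      fun i j hij => eF_commute_of_ne hij a b b a]
  simp only [eF_mul_sub_mul, Finset.sum_sub_distrib, EF]

theorem EF_mul_EF_sub_EF_symm (a b : Fin N) :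
    EF (n := n) a b * EF b a - EF a a = EF b a * EF a b - EF b b := by
  rw [sub_eq_sub_iff_sub_eq_sub, EF_mul_sub_mul]

end Commutators

theorem LF_update_eq {N n : ℕ} (z : Fin n → ℂ) (lam : Fin N → ℂ) {a b : Fin N} (hba : b ≠ a)
    (t : ℂ) :
    LF z (Function.update lam b t) a
      = LF z (Function.update lam b 0) a
        - (t / (lam a - t)) • (EF a b * EF b a - EF a a) := by
  have hb : b ∈ Finset.univ.erase a := Finset.mem_erase.mpr ⟨hba, Finset.mem_univ b⟩
  have split : ∀ s : ℂ, (∑ c ∈ Finset.univ.erase a,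
      (Function.update lam b s c / (Function.update lam b s a - Function.update lam b s c)) •
        (EF (n := n) a c * EF c a - EF a a))
      = (s / (lam a - s)) • (EF a b * EF b a - EF a a)
        + ∑ c ∈ (Finset.univ.erase a).erase b,
            (lam c / (lam a - lam c)) • (EF a c * EF c a - EF a a) := by
    intro s
    rw [← Finset.add_sum_erase _ _ hb, Function.update_self, Function.update_of_ne hba.symm]
    congr 1
    refine Finset.sum_congr rfl fun c hc => ?_
    rw [Function.update_of_ne (Finset.mem_erase.mp hc).1]
  rw [LF, LF, split t, split 0, zero_div, zero_smul, zero_add]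
  abel

theorem hasDerivAt_div_const_sub {x y : ℂ} (h : x - y ≠ 0) :
    HasDerivAt (fun t : ℂ => t / (x - t)) (x / (x - y) ^ 2) y :=
  ((hasDerivAt_id y).div ((hasDerivAt_const y x).sub (hasDerivAt_id y)) h).congr_deriv
    (by simp only [Pi.sub_apply, id_eq]; ring)

theorem hasDerivAt_LF_update {N n : ℕ} {W : Type*} [NormedAddCommGroup W] [NormedSpace ℂ W]
    (ρ : Atp N n →ₗ[ℂ] W) (z : Fin n → ℂ) (lam : Fin N → ℂ) {a b : Fin N}
    (hlam : lam a ≠ lam b) :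
    HasDerivAt (fun t : ℂ => ρ (LF z (Function.update lam b t) a))
      (-((lam a / (lam a - lam b) ^ 2) • ρ (EF a b * EF b a - EF a a))) (lam b) := by
  have hLF : (fun t : ℂ => ρ (LF z (Function.update lam b t) a))
      = fun t => ρ (LF z (Function.update lam b 0) a)
          - (t / (lam a - t)) • ρ (EF a b * EF b a - EF a a) :=
    funext fun t => by rw [LF_update_eq z lam (ne_of_apply_ne lam hlam).symm, map_sub, map_smul]
  rw [hLF]
  exact ((hasDerivAt_div_const_sub (sub_ne_zero.mpr hlam)).smul_const _).const_sub _

theorem dynamical_derivative_terms_cancel_general {N n : ℕ}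
    (z : Fin n → ℂ) (lam : Fin N → ℂ) (hlam : lam ∈ Om N)
    (V : Type*) [NormedAddCommGroup V] [NormedSpace ℂ V]
    (ρ : Atp N n →ₐ[ℂ] (V →L[ℂ] V)) (a b : Fin N) (hab : a ≠ b) :
    ∃ Da Db : V →L[ℂ] V,
      HasDerivAt (fun t : ℂ => ρ (LF z (Function.update lam b t) a)) Da (lam b) ∧
      HasDerivAt (fun t : ℂ => ρ (LF z (Function.update lam a t) b)) Db (lam a) ∧
      lam b • Da = lam a • Db ∧
      lam b • Da
        = (-(lam a * lam b) * ((lam a - lam b) ^ 2)⁻¹) • ρ (EF a b * EF b a - EF a a) ∧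
      (-(lam a * lam b) * ((lam a - lam b) ^ 2)⁻¹) • ρ (EF a b * EF b a - EF a a)
        = (-(lam a * lam b) * ((lam a - lam b) ^ 2)⁻¹) • ρ (EF b a * EF a b - EF b b) := by
  have hne : lam a ≠ lam b := hlam.2.ne hab
  have hEF := EF_mul_EF_sub_EF_symm (n := n) a b
  refine ⟨_, _, hasDerivAt_LF_update ρ.toLinearMap z lam hne,
    hasDerivAt_LF_update ρ.toLinearMap z lam hne.symm, ?_, ?_, by rw [hEF]⟩
  · rw [smul_neg, smul_neg, smul_smul, smul_smul, sub_sq_comm (lam b), hEF]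
    congr 2
    ring
  · rw [smul_neg, smul_smul, ← neg_smul]
    congr 1
    ring

theorem dynamical_derivative_terms_cancel {N n : ℕ}
    (z : Fin n → ℂ) (lam : Fin N → ℂ) (hlam : lam ∈ Om N)
    (V : Type*) [NormedAddCommGroup V] [NormedSpace ℂ V] [FiniteDimensional ℂ V]
    (ρ : Atp N n →ₐ[ℂ] (V →L[ℂ] V)) (a b : Fin N) (hab : a ≠ b) :
    ∃ Da Db : V →L[ℂ] V,
      HasDerivAt (fun t : ℂ => ρ (LF z (Function.update lam b t) a)) Da (lam b) ∧
      HasDerivAt (fun t : ℂ => ρ (LF z (Function.update lam a t) b)) Db (lam a) ∧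
      lam b • Da = lam a • Db ∧
      lam b • Da
        = (-(lam a * lam b) * ((lam a - lam b) ^ 2)⁻¹) • ρ (EF a b * EF b a - EF a a) ∧
      (-(lam a * lam b) * ((lam a - lam b) ^ 2)⁻¹) • ρ (EF a b * EF b a - EF a a)
        = (-(lam a * lam b) * ((lam a - lam b) ^ 2)⁻¹) • ρ (EF b a * EF a b - EF b b) :=
  dynamical_derivative_terms_cancel_general z lam hlam V ρ a b hab
end
end

section
/- The qKZ operators pairwise commute (Frenkel–Reshetikhin, in the case of tensor products of vector representations of gl_N with the explicit rational R-matrix): for all l, m ∈ {1,…,n}, K_l(z_1,…,z_m+p,…,z_n; λ) · K_m(z_1,…,z_n; λ) = K_m(z_1,…,z_l+p,…,z_n; λ) · K_l(z_1,…,z_n; λ) as operators on W = (ℂ^N)^{⊗n}. -/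
noncomputable section

/-- Basis of `W = (ℂ^N)^{⊗n}`: multi-indices `Fin n → Fin N`. -/
abbrev BIdx (N n : ℕ) := Fin n → Fin N

/-- `End(W)` realized as matrices in the standard tensor basis of `W = (ℂ^N)^{⊗n}`. -/
abbrev EndW (N n : ℕ) := Matrix (BIdx N n) (BIdx N n) ℂ

/-- `E_{a,b}^{(i)}`: the matrix unit `E_{a,b}` of `gl_N` acting in the `i`-th tensor
factor of `W` (it sends the basis vector `e_{m}` to `e_{m[i ↦ a]}` if `m i = b`). -/
def Ei {N n : ℕ} (i : Fin n) (a b : Fin N) : EndW N n :=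
  Matrix.of fun k m => if k = Function.update m i a ∧ m i = b then 1 else 0

/-- `E_{a,b} = Σ_i E_{a,b}^{(i)}`. -/
def Etot {N n : ℕ} (a b : Fin N) : EndW N n := ∑ i, Ei i a b

/-- The flip `P` acting in the `i`-th and `j`-th tensor factors of `W`. -/
def Pflip {N n : ℕ} (i j : Fin n) : EndW N n :=
  Matrix.of fun k m => if k = m ∘ Equiv.swap i j then 1 else 0

/-- The rational R-matrix `R(x) = (x·Id + P)/(x+1)` acting in factors `i,j` of `W`. -/
def Rm {N n : ℕ} (x : ℂ) (i j : Fin n) : EndW N n :=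
  (x + 1)⁻¹ • (x • (1 : EndW N n) + Pflip i j)

/-- `Λ^{(m)}(λ) = diag(λ_1,…,λ_N)` acting in the `m`-th tensor factor of `W`. -/
def LamD {N n : ℕ} (lam : Fin N → ℂ) (m : Fin n) : EndW N n :=
  Matrix.diagonal fun k => lam (k m)

/-- The dynamical operator coefficient `L_a(z;λ)` on `W`. -/
def Ldyn {N n : ℕ} (z : Fin n → ℂ) (lam : Fin N → ℂ) (a : Fin N) : EndW N n :=
  (2⁻¹ : ℂ) • (Etot a a) ^ 2
  - ∑ i, z i • Ei i a a
  - ∑ b : Fin N, ∑ i : Fin n, ∑ j : Fin n, (if i < j then Ei i a b * Ei j b a else 0)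
  - ∑ b ∈ Finset.univ.erase a,
      (lam b / (lam a - lam b)) • (Etot a b * Etot b a - Etot a a)

/-- Ordered product `R^{(1,m)}(z_1−z_m−p) ⋯ R^{(m−1,m)}(z_{m−1}−z_m−p)`. -/
def Kleft {N n : ℕ} (p : ℂ) (z : Fin n → ℂ) (m : Fin n) : EndW N n :=
  (((List.finRange n).filter (fun i => i < m)).map fun i => Rm (z i - z m - p) i m).prod

/-- Ordered product `R^{(m,n)}(z_m−z_n) R^{(m,n−1)}(z_m−z_{n−1}) ⋯ R^{(m,m+1)}(z_m−z_{m+1})`. -/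
def Kright {N n : ℕ} (z : Fin n → ℂ) (m : Fin n) : EndW N n :=
  (((List.finRange n).filter (fun j => m < j)).reverse.map fun j => Rm (z m - z j) m j).prod

/-- The qKZ operator coefficient `K_m(z;λ)` on `W`. -/
def Kqkz {N n : ℕ} (p : ℂ) (z : Fin n → ℂ) (lam : Fin N → ℂ) (m : Fin n) : EndW N n :=
  (Kleft p z m)⁻¹ * LamD lam m * Kright z m

/-- The genericity condition on `z`: for `i ≠ j`, the numbers `z_i−z_j`, `z_i−z_j+p`,
`z_i−z_j−p` avoid `{1, −1}`, so all R-matrix factors are defined and invertible. -/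
def ZGeneric {n : ℕ} (p : ℂ) (z : Fin n → ℂ) : Prop :=
  ∀ i j : Fin n, i ≠ j →
    ∀ x ∈ ({z i - z j, z i - z j + p, z i - z j - p} : Set ℂ), x ≠ 1 ∧ x ≠ -1

section Aux
open Matrix
variable {N n : ℕ}

def Pm (σ : Equiv.Perm (Fin n)) : EndW N n :=
  Matrix.of fun k m => if k = m ∘ σ then 1 else 0

lemma Pflip_eq (i j : Fin n) : (Pflip i j : EndW N n) = Pm (Equiv.swap i j) := rfl

lemma Pm_one : (Pm (Equiv.refl (Fin n)) : EndW N n) = 1 := by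
  ext k m
  simp [Pm, Matrix.one_apply, eq_comm, Function.comp]

lemma Pm_mul (σ τ : Equiv.Perm (Fin n)) :
    (Pm σ : EndW N n) * Pm τ = Pm (σ.trans τ) := by
  ext k m
  simp only [Matrix.mul_apply, Pm, Matrix.of_apply]
  rw [Finset.sum_eq_single (m ∘ τ)]
  · simp [Function.comp_assoc]
    congr
  · intro t _ ht
    simp [ht]
  · simp

lemma Rm_symm (x : ℂ) (i j : Fin n) : (Rm x i j : EndW N n) = Rm x j i := by
  simp [Rm, Pflip, Equiv.swap_comm]

lemma Rm_unit (x : ℂ) (h1 : x ≠ 1) (h2 : x ≠ -1) (i j : Fin n) :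
    (Rm x i j : EndW N n) * Rm (-x) i j = 1 := by
  have hx1 : x + 1 ≠ 0 := fun h => h2 (by linear_combination h)
  have hx2 : -x + 1 ≠ 0 := fun h => h1 (by linear_combination -h)
  simp only [Rm, Pflip_eq, smul_mul_assoc, mul_smul_comm, add_mul, mul_add, smul_smul,
    smul_add, one_mul, mul_one, Pm_mul, Equiv.swap_swap, Pm_one]
  rw [show ((-x : ℂ)+1)⁻¹ = (-x+1)⁻¹ from rfl]
  match_scalars
  · field_simp
    ring
  · field_simp
    ring

section PermLemmas
variable {α : Type*} [DecidableEq α]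
open Equiv

private lemma swap_case {a b c : α} (σ τ : Equiv.Perm α)
    (h : ∀ x, x = a ∨ x = b ∨ x = c → σ x = τ x)
    (h' : ∀ x, x ≠ a → x ≠ b → x ≠ c → σ x = τ x) : σ = τ := by
  ext x
  by_cases hxa : x = a
  · exact h x (Or.inl hxa)
  by_cases hxb : x = b
  · exact h x (Or.inr (Or.inl hxb))
  by_cases hxc : x = c
  · exact h x (Or.inr (Or.inr hxc))
  exact h' x hxa hxb hxc

variable {a b c : α} (hab : a ≠ b) (hac : a ≠ c) (hbc : b ≠ c)
include hab hac hbc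

lemma pe1 : (swap a c).trans (swap b c) = (swap a b).trans (swap a c) := by
  have hba := hab.symm; have hca := hac.symm; have hcb := hbc.symm
  apply swap_case (a := a) (b := b) (c := c)
  · rintro x (rfl | rfl | rfl) <;>
      simp [Equiv.swap_apply_of_ne_of_ne, swap_apply_left, swap_apply_right, *]
  · intro x hxa hxb hxc
    simp [Equiv.swap_apply_of_ne_of_ne, *]

lemma pe2 : (swap a b).trans (swap b c) = (swap a c).trans (swap a b) := by
  have hba := hab.symm; have hca := hac.symm; have hcb := hbc.symm
  apply swap_case (a := a) (b := b) (c := c)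
  · rintro x (rfl | rfl | rfl) <;>
      simp [Equiv.swap_apply_of_ne_of_ne, swap_apply_left, swap_apply_right, *]
  · intro x hxa hxb hxc
    simp [Equiv.swap_apply_of_ne_of_ne, *]

lemma pe4 : (swap b c).trans (swap a b) = (swap a b).trans (swap a c) := by
  have hba := hab.symm; have hca := hac.symm; have hcb := hbc.symm
  apply swap_case (a := a) (b := b) (c := c)
  · rintro x (rfl | rfl | rfl) <;>
      simp [Equiv.swap_apply_of_ne_of_ne, swap_apply_left, swap_apply_right, *]
  · intro x hxa hxb hxc
    simp [Equiv.swap_apply_of_ne_of_ne, *]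

lemma pe5 : (swap b c).trans (swap a c) = (swap a c).trans (swap a b) := by
  have hba := hab.symm; have hca := hac.symm; have hcb := hbc.symm
  apply swap_case (a := a) (b := b) (c := c)
  · rintro x (rfl | rfl | rfl) <;>
      simp [Equiv.swap_apply_of_ne_of_ne, swap_apply_left, swap_apply_right, *]
  · intro x hxa hxb hxc
    simp [Equiv.swap_apply_of_ne_of_ne, *]

omit hab hac hbc in
lemma pe7 : (swap a b).trans ((swap a b).trans (swap a c)) = swap a c := by
  rw [← Equiv.trans_assoc, Equiv.swap_swap, Equiv.refl_trans]

lemma pe8 : (swap b c).trans ((swap a c).trans (swap a b)) = swap a c := by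
  have hba := hab.symm; have hca := hac.symm; have hcb := hbc.symm
  apply swap_case (a := a) (b := b) (c := c)
  · rintro x (rfl | rfl | rfl) <;>
      simp [Equiv.swap_apply_of_ne_of_ne, swap_apply_left, swap_apply_right, *]
  · intro x hxa hxb hxc
    simp [Equiv.swap_apply_of_ne_of_ne, *]

end PermLemmas

lemma YBE (x y : ℂ) {a b c : Fin n} (hab : a ≠ b) (hac : a ≠ c) (hbc : b ≠ c) :
    (Rm x a b : EndW N n) * Rm (x+y) a c * Rm y b c
      = Rm y b c * Rm (x+y) a c * Rm x a b := by
  simp only [Rm, Pflip_eq, smul_mul_assoc, mul_smul_comm, add_mul, mul_add, smul_smul,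
    smul_add, one_mul, mul_one, Pm_mul, Equiv.trans_assoc,
    pe1 hab hac hbc, pe2 hab hac hbc, pe4 hab hac hbc, pe5 hab hac hbc,
    pe7 (a := a) (b := b) (c := c), pe8 hab hac hbc,
    Equiv.swap_swap, Equiv.trans_refl, Equiv.refl_trans]
  match_scalars <;> ring

section ListLemmas
variable {ι M : Type*} [Monoid M]

lemma commute_prod (X : M) (L : List ι) (f : ι → M) (h : ∀ k ∈ L, Commute X (f k)) :
    Commute X (L.map f).prod := by
  apply Commute.list_prod_right
  intro x hx
  obtain ⟨k, hk, rfl⟩ := List.mem_map.1 hx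
  exact h k hk

lemma prod_reverse_inv (L : List ι) (f g : ι → M) (h : ∀ k ∈ L, f k * g k = 1) :
    (L.map f).prod * (L.reverse.map g).prod = 1 := by
  induction L with
  | nil => simp
  | cons a T ih =>
    simp only [List.map_cons, List.prod_cons, List.reverse_cons, List.map_append,
      List.prod_append, List.map_cons, List.prod_cons, List.map_nil, List.prod_nil, mul_one]
    rw [mul_assoc, ← mul_assoc (T.map f).prod, ih (fun k hk => h k (List.mem_cons_of_mem _ hk)),
      one_mul, h a (List.mem_cons_self)]

lemma interleave (L : List ι) (hnd : L.Nodup) (f g : ι → M)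
    (h : ∀ a ∈ L, ∀ b ∈ L, a ≠ b → Commute (f a) (g b)) :
    (L.map f).prod * (L.map g).prod = (L.map fun k => f k * g k).prod := by
  induction L with
  | nil => simp
  | cons k T ih =>
    simp only [List.map_cons, List.prod_cons]
    have hcomm : Commute (g k) (T.map f).prod := by
      apply commute_prod
      intro a ha
      exact (h a (List.mem_cons_of_mem _ ha) k (List.mem_cons_self)
        (fun hak => (List.nodup_cons.1 hnd).1 (hak ▸ ha))).symm
    rw [mul_assoc, ← mul_assoc (T.map f).prod, ← hcomm.eq, mul_assoc, ← mul_assoc,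
      ih (List.nodup_cons.1 hnd).2
        (fun a ha b hb hab => h a (List.mem_cons_of_mem _ ha) b (List.mem_cons_of_mem _ hb) hab)]

lemma zipper (L : List ι) (f g : ι → M) (X : M)
    (h : ∀ k ∈ L, (f k * g k) * X = X * (g k * f k)) :
    (L.map fun k => f k * g k).prod * X = X * (L.map fun k => g k * f k).prod := by
  induction L with
  | nil => simp
  | cons k T ih =>
    simp only [List.map_cons, List.prod_cons]
    rw [mul_assoc, ih (fun a ha => h a (List.mem_cons_of_mem _ ha)), ← mul_assoc,
      h k (List.mem_cons_self), mul_assoc]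

lemma prod_comm_prod {ι M : Type*} [Monoid M] (L L' : List ι) (f g : ι → M)
    (h : ∀ a ∈ L, ∀ b ∈ L', Commute (f a) (g b)) :
    (L.map f).prod * (L'.map g).prod = (L'.map g).prod * (L.map f).prod := by
  have : Commute (L.map f).prod ((L'.map g).prod) := by
    apply Commute.list_prod_left
    intro x hx
    obtain ⟨a, ha, rfl⟩ := List.mem_map.1 hx
    exact commute_prod _ _ _ (fun b hb => h a ha b hb)
  exact this.eq

end ListLemmas

section CommuteLemmas

lemma diag_comm_Pm (f : BIdx N n → ℂ) (σ : Equiv.Perm (Fin n))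
    (h : ∀ k : BIdx N n, f (k ∘ σ) = f k) :
    Commute (Matrix.diagonal f) (Pm σ : EndW N n) := by
  show _ * _ = _ * _
  ext k m
  rw [Matrix.diagonal_mul, Matrix.mul_diagonal]
  show f k * (if k = m ∘ σ then 1 else 0) = (if k = m ∘ σ then 1 else 0) * f m
  by_cases hk : k = m ∘ σ
  · subst hk; simp [h m]
  · simp [hk]

lemma diag_comm_Rm (f : BIdx N n → ℂ) (x : ℂ) (i j : Fin n)
    (h : ∀ k : BIdx N n, f (k ∘ Equiv.swap i j) = f k) :
    Commute (Matrix.diagonal f) (Rm x i j : EndW N n) := by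
  rw [Rm, Pflip_eq]
  exact (((Commute.one_right _).smul_right x).add_right (diag_comm_Pm f _ h)).smul_right _

lemma LamD_comm_Rm (lam : Fin N → ℂ) (t : Fin n) (x : ℂ) (i j : Fin n)
    (hti : t ≠ i) (htj : t ≠ j) :
    Commute (LamD lam t) (Rm x i j : EndW N n) := by
  apply diag_comm_Rm
  intro k
  simp [Function.comp, Equiv.swap_apply_of_ne_of_ne hti htj]

lemma LamD_mul_comm_Rm (lam : Fin N → ℂ) (x : ℂ) (i j : Fin n) :
    Commute (LamD lam i * LamD lam j) (Rm x i j : EndW N n) := by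
  rw [LamD, LamD, Matrix.diagonal_mul_diagonal]
  apply diag_comm_Rm
  intro k
  simp [Function.comp, mul_comm]

lemma Pm_comm (σ τ : Equiv.Perm (Fin n)) (h : σ.trans τ = τ.trans σ) :
    Commute (Pm σ : EndW N n) (Pm τ) := by
  show _ * _ = _ * _
  rw [Pm_mul, Pm_mul, h]

lemma swap_disjoint_comm {i j k l : Fin n} (h1 : i ≠ k) (h2 : i ≠ l) (h3 : j ≠ k) (h4 : j ≠ l) :
    (Equiv.swap i j).trans (Equiv.swap k l) = (Equiv.swap k l).trans (Equiv.swap i j) := by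
  ext x
  simp only [Equiv.trans_apply, Equiv.swap_apply_def]
  split_ifs <;> simp_all

lemma Rm_comm_Rm (x y : ℂ) {i j k l : Fin n}
    (h1 : i ≠ k) (h2 : i ≠ l) (h3 : j ≠ k) (h4 : j ≠ l) :
    Commute (Rm x i j : EndW N n) (Rm y k l) := by
  show _ * _ = _ * _
  simp only [Rm, Pflip_eq, smul_mul_assoc, mul_smul_comm, add_mul, mul_add, smul_smul,
    smul_add, one_mul, mul_one, Pm_mul]
  rw [swap_disjoint_comm h1 h2 h3 h4]
  match_scalars <;> ring

end CommuteLemmas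

section FilterSplit
variable {n : ℕ}

private instance : IsAntisymm (Fin n) (· < ·) :=
  ⟨fun _ _ h1 h2 => absurd h1 (asymm h2)⟩

lemma filter_lt_split (l m : Fin n) (hlm : l < m) :
    ((List.finRange n).filter (fun k => k < m))
      = (((List.finRange n).filter (fun k => k < l)) ++
          l :: ((List.finRange n).filter (fun k => l < k ∧ k < m))) := by
  refine (fun hp h1 h2 => List.Perm.eq_of_pairwise (le := (· < ·))
    (fun a b _ _ h1 h2 => absurd h1 (asymm h2)) h1 h2 hp) ?_ ?_ ?_
  · rw [List.perm_ext_iff_of_nodup ((List.nodup_finRange n).filter _)]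
    · intro x
      simp only [List.mem_filter, List.mem_finRange, List.mem_append, List.mem_cons,
        decide_eq_true_eq, true_and]
      constructor
      · intro hx
        rcases lt_trichotomy x l with h | h | h
        · exact Or.inl h
        · exact Or.inr (Or.inl h)
        · exact Or.inr (Or.inr ⟨h, hx⟩)
      · rintro (h | h | h)
        · exact h.trans hlm
        · exact h ▸ hlm
        · exact h.2
    · rw [List.nodup_append]
      refine ⟨(List.nodup_finRange n).filter _, ?_, ?_⟩
      · rw [List.nodup_cons]
        refine ⟨fun hl => ?_, (List.nodup_finRange n).filter _⟩
        · have := (List.mem_filter.1 hl).2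
          simp only [decide_eq_true_eq] at this
          exact lt_irrefl l this.1
      · intro x hx _ hx' rfl
        have h1 := (List.mem_filter.1 hx).2
        simp only [decide_eq_true_eq] at h1
        rcases List.mem_cons.1 hx' with rfl | hx''
        · exact lt_irrefl x h1
        · have h2 := (List.mem_filter.1 hx'').2
          simp only [decide_eq_true_eq] at h2
          exact absurd (h1.trans h2.1) (lt_irrefl x)
  · exact (List.pairwise_lt_finRange n).filter _
  · show List.Pairwise _ _
    rw [List.pairwise_append]
    refine ⟨(List.pairwise_lt_finRange n).filter _, ?_, ?_⟩
    · rw [List.pairwise_cons]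
      refine ⟨fun k hk => ?_, (List.pairwise_lt_finRange n).filter _⟩
      have := (List.mem_filter.1 hk).2
      simp only [decide_eq_true_eq] at this
      exact this.1
    · intro a ha b hb
      have h1 := (List.mem_filter.1 ha).2
      simp only [decide_eq_true_eq] at h1
      rcases List.mem_cons.1 hb with rfl | hb'
      · exact h1
      · have h2 := (List.mem_filter.1 hb').2
        simp only [decide_eq_true_eq] at h2
        exact h1.trans h2.1

lemma filter_gt_split (l m : Fin n) (hlm : l < m) :
    ((List.finRange n).filter (fun k => l < k))
      = (((List.finRange n).filter (fun k => l < k ∧ k < m)) ++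
          m :: ((List.finRange n).filter (fun k => m < k))) := by
  refine (fun hp h1 h2 => List.Perm.eq_of_pairwise (le := (· < ·))
    (fun a b _ _ h1 h2 => absurd h1 (asymm h2)) h1 h2 hp) ?_ ?_ ?_
  · rw [List.perm_ext_iff_of_nodup ((List.nodup_finRange n).filter _)]
    · intro x
      simp only [List.mem_filter, List.mem_finRange, List.mem_append, List.mem_cons,
        decide_eq_true_eq, true_and]
      constructor
      · intro hx
        rcases lt_trichotomy x m with h | h | h
        · exact Or.inl ⟨hx, h⟩
        · exact Or.inr (Or.inl h)
        · exact Or.inr (Or.inr h)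
      · rintro (h | h | h)
        · exact h.1
        · exact h ▸ hlm
        · exact hlm.trans h
    · rw [List.nodup_append]
      refine ⟨(List.nodup_finRange n).filter _, ?_, ?_⟩
      · rw [List.nodup_cons]
        refine ⟨fun hl => ?_, (List.nodup_finRange n).filter _⟩
        · have := (List.mem_filter.1 hl).2
          simp only [decide_eq_true_eq] at this
          exact lt_irrefl m this
      · intro x hx _ hx' rfl
        have h1 := (List.mem_filter.1 hx).2
        simp only [decide_eq_true_eq] at h1
        rcases List.mem_cons.1 hx' with rfl | hx''
        · exact lt_irrefl x h1.2
        · have h2 := (List.mem_filter.1 hx'').2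
          simp only [decide_eq_true_eq] at h2
          exact absurd (h1.2.trans h2) (lt_irrefl x)
  · exact (List.pairwise_lt_finRange n).filter _
  · show List.Pairwise _ _
    rw [List.pairwise_append]
    refine ⟨(List.pairwise_lt_finRange n).filter _, ?_, ?_⟩
    · rw [List.pairwise_cons]
      refine ⟨fun k hk => ?_, (List.pairwise_lt_finRange n).filter _⟩
      have := (List.mem_filter.1 hk).2
      simp only [decide_eq_true_eq] at this
      exact this
    · intro a ha b hb
      have h1 := (List.mem_filter.1 ha).2
      simp only [decide_eq_true_eq] at h1
      rcases List.mem_cons.1 hb with rfl | hb'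
      · exact h1.2
      · have h2 := (List.mem_filter.1 hb').2
        simp only [decide_eq_true_eq] at h2
        exact h1.2.trans h2

end FilterSplit

lemma rearrange {M : Type*} [Monoid M]
    (A B₁ B₂ C₁ C₂ D Ll Lm Rp Rq Ru Rv : M)
    (hz1 : B₁ * C₂ * Rq = Rq * (C₂ * B₁))
    (hz2 : D * B₂ * Rv = Rv * (B₂ * D))
    (hz3 : Ru * (C₁ * A) = A * C₁ * Ru)
    (hu1 : Rp * Rq = 1)
    (hu2 : Ru * Rv = 1)
    (c1 : B₂ * C₂ = C₂ * B₂) (c2 : Ll * C₂ = C₂ * Ll) (c3 : A * C₂ = C₂ * A)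
    (c4 : B₁ * C₁ = C₁ * B₁) (c5 : B₂ * C₁ = C₁ * B₂) (c6 : Ll * C₁ = C₁ * Ll)
    (c7 : B₂ * Lm = Lm * B₂) (c8 : B₁ * Lm = Lm * B₁) (c9 : Ll * Lm = Lm * Ll)
    (c10 : D * A = A * D) (c11 : Lm * A = A * Lm) (c12 : D * Ll = Ll * D)
    (c13 : Lm * Ll * Rv = Rv * (Lm * Ll)) (c14 : D * B₁ = B₁ * D) :
    A * (Ll * (B₂ * (Rp * (B₁ * (C₂ * (Rq * (C₁ * (Lm * D))))))))
      = C₂ * (Ru * (C₁ * (Lm * (D * (A * (Ll * (B₂ * (Rv * B₁)))))))) := by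
  have hL : A * (Ll * (B₂ * (Rp * (B₁ * (C₂ * (Rq * (C₁ * (Lm * D))))))))
      = C₂ * (A * (C₁ * (Lm * (Ll * (B₂ * (B₁ * D)))))) := by
    calc A * (Ll * (B₂ * (Rp * (B₁ * (C₂ * (Rq * (C₁ * (Lm * D))))))))
        = A * (Ll * (B₂ * (Rp * (B₁ * C₂ * Rq * (C₁ * (Lm * D)))))) := by
          simp only [mul_assoc]
      _ = A * (Ll * (B₂ * (Rp * (Rq * (C₂ * B₁) * (C₁ * (Lm * D)))))) := by rw [hz1]
      _ = A * (Ll * (B₂ * (Rp * Rq * (C₂ * (B₁ * (C₁ * (Lm * D))))))) := by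
          simp only [mul_assoc]
      _ = A * (Ll * (B₂ * (1 * (C₂ * (B₁ * (C₁ * (Lm * D))))))) := by rw [hu1]
      _ = A * (Ll * (B₂ * (C₂ * (B₁ * C₁ * (Lm * D))))) := by
          simp only [one_mul, mul_assoc]
      _ = A * (Ll * (B₂ * (C₂ * (C₁ * B₁ * (Lm * D))))) := by rw [c4]
      _ = A * (Ll * (B₂ * C₂ * (C₁ * (B₁ * (Lm * D))))) := by simp only [mul_assoc]
      _ = A * (Ll * (C₂ * B₂ * (C₁ * (B₁ * (Lm * D))))) := by rw [c1]
      _ = A * (Ll * (C₂ * (B₂ * C₁ * (B₁ * (Lm * D))))) := by simp only [mul_assoc]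
      _ = A * (Ll * (C₂ * (C₁ * B₂ * (B₁ * (Lm * D))))) := by rw [c5]
      _ = A * (Ll * (C₂ * (C₁ * (B₂ * (B₁ * Lm * D))))) := by simp only [mul_assoc]
      _ = A * (Ll * (C₂ * (C₁ * (B₂ * (Lm * B₁ * D))))) := by rw [c8]
      _ = A * (Ll * (C₂ * (C₁ * (B₂ * Lm * (B₁ * D))))) := by simp only [mul_assoc]
      _ = A * (Ll * (C₂ * (C₁ * (Lm * B₂ * (B₁ * D))))) := by rw [c7]
      _ = A * (Ll * C₂ * (C₁ * (Lm * (B₂ * (B₁ * D))))) := by simp only [mul_assoc]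
      _ = A * (C₂ * Ll * (C₁ * (Lm * (B₂ * (B₁ * D))))) := by rw [c2]
      _ = A * (C₂ * (Ll * C₁ * (Lm * (B₂ * (B₁ * D))))) := by simp only [mul_assoc]
      _ = A * (C₂ * (C₁ * Ll * (Lm * (B₂ * (B₁ * D))))) := by rw [c6]
      _ = A * (C₂ * (C₁ * (Ll * Lm * (B₂ * (B₁ * D))))) := by simp only [mul_assoc]
      _ = A * (C₂ * (C₁ * (Lm * Ll * (B₂ * (B₁ * D))))) := by rw [c9]
      _ = A * C₂ * (C₁ * (Lm * (Ll * (B₂ * (B₁ * D))))) := by simp only [mul_assoc]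
      _ = C₂ * A * (C₁ * (Lm * (Ll * (B₂ * (B₁ * D))))) := by rw [c3]
      _ = C₂ * (A * (C₁ * (Lm * (Ll * (B₂ * (B₁ * D)))))) := by simp only [mul_assoc]
  have hR : C₂ * (Ru * (C₁ * (Lm * (D * (A * (Ll * (B₂ * (Rv * B₁))))))))
      = C₂ * (A * (C₁ * (Lm * (Ll * (B₂ * (B₁ * D)))))) := by
    calc C₂ * (Ru * (C₁ * (Lm * (D * (A * (Ll * (B₂ * (Rv * B₁))))))))
        = C₂ * (Ru * (C₁ * (Lm * (D * A * (Ll * (B₂ * (Rv * B₁))))))) := by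
          simp only [mul_assoc]
      _ = C₂ * (Ru * (C₁ * (Lm * (A * D * (Ll * (B₂ * (Rv * B₁))))))) := by rw [c10]
      _ = C₂ * (Ru * (C₁ * (Lm * A * (D * Ll * (B₂ * (Rv * B₁)))))) := by
          simp only [mul_assoc]
      _ = C₂ * (Ru * (C₁ * (A * Lm * (Ll * D * (B₂ * (Rv * B₁)))))) := by rw [c11, c12]
      _ = C₂ * (Ru * (C₁ * (A * (Lm * (Ll * (D * B₂ * Rv * B₁)))))) := by
          simp only [mul_assoc]
      _ = C₂ * (Ru * (C₁ * (A * (Lm * (Ll * (Rv * (B₂ * D) * B₁)))))) := by rw [hz2]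
      _ = C₂ * (Ru * (C₁ * (A * (Lm * Ll * Rv * (B₂ * (D * B₁)))))) := by
          simp only [mul_assoc]
      _ = C₂ * (Ru * (C₁ * (A * (Rv * (Lm * Ll) * (B₂ * (B₁ * D)))))) := by rw [c13, c14]
      _ = C₂ * (Ru * (C₁ * A) * (Rv * (Lm * (Ll * (B₂ * (B₁ * D)))))) := by
          simp only [mul_assoc]
      _ = C₂ * (A * C₁ * Ru * (Rv * (Lm * (Ll * (B₂ * (B₁ * D)))))) := by rw [hz3]
      _ = C₂ * (A * (C₁ * (Ru * Rv * (Lm * (Ll * (B₂ * (B₁ * D))))))) := by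
          simp only [mul_assoc]
      _ = C₂ * (A * (C₁ * (1 * (Lm * (Ll * (B₂ * (B₁ * D))))))) := by rw [hu2]
      _ = C₂ * (A * (C₁ * (Lm * (Ll * (B₂ * (B₁ * D)))))) := by rw [one_mul]
  rw [hL, hR]

section KeyDefs
variable {N n : ℕ}

def MA (p : ℂ) (z : Fin n → ℂ) (l : Fin n) : EndW N n :=
  ((((List.finRange n).filter (fun k => k < l)).reverse).map fun i => Rm (z l - z i + p) i l).prod

def MB2 (z : Fin n → ℂ) (l m : Fin n) : EndW N n :=
  ((((List.finRange n).filter (fun k => m < k)).reverse).map fun j => Rm (z l - z j) l j).prod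

def MB1 (z : Fin n → ℂ) (l m : Fin n) : EndW N n :=
  ((((List.finRange n).filter (fun k => l < k ∧ k < m)).reverse).map fun k => Rm (z l - z k) l k).prod

def MC2 (p : ℂ) (z : Fin n → ℂ) (l m : Fin n) : EndW N n :=
  ((((List.finRange n).filter (fun k => l < k ∧ k < m)).reverse).map fun k => Rm (z m - z k + p) k m).prod

def MC1 (p : ℂ) (z : Fin n → ℂ) (l m : Fin n) : EndW N n :=
  ((((List.finRange n).filter (fun k => k < l)).reverse).map fun i => Rm (z m - z i + p) i m).prod

def MD (z : Fin n → ℂ) (m : Fin n) : EndW N n :=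
  ((((List.finRange n).filter (fun k => m < k)).reverse).map fun j => Rm (z m - z j) m j).prod

end KeyDefs

lemma key {N n : ℕ} (p : ℂ) (lam : Fin N → ℂ) (z : Fin n → ℂ) (hz : ZGeneric p z)
    (l m : Fin n) (hlm : l < m) :
    Kqkz p (Function.update z m (z m + p)) lam l * Kqkz p z lam m
      = Kqkz p (Function.update z l (z l + p)) lam m * Kqkz p z lam l := by
  have hlm' : l ≠ m := ne_of_lt hlm
  have hml' : m ≠ l := hlm'.symm
  have memLo : ∀ i ∈ (List.finRange n).filter (fun k => k < l), i < l := by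
    intro i hi; simpa using (List.mem_filter.1 hi).2
  have memMid : ∀ k ∈ (List.finRange n).filter (fun k => l < k ∧ k < m), l < k ∧ k < m := by
    intro k hk; simpa using (List.mem_filter.1 hk).2
  have memHi : ∀ j ∈ (List.finRange n).filter (fun k => m < k), m < j := by
    intro j hj; simpa using (List.mem_filter.1 hj).2
  have ndLoR : (((List.finRange n).filter (fun k => k < l)).reverse).Nodup :=
    List.nodup_reverse.2 ((List.nodup_finRange n).filter _)
  have ndMidR : (((List.finRange n).filter (fun k => l < k ∧ k < m)).reverse).Nodup :=
    List.nodup_reverse.2 ((List.nodup_finRange n).filter _)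
  have ndHiR : (((List.finRange n).filter (fun k => m < k)).reverse).Nodup :=
    List.nodup_reverse.2 ((List.nodup_finRange n).filter _)
  -- unitarity pairs
  have hu1 : (Rm (z l - z m - p) l m : EndW N n) * Rm (z m - z l + p) l m = 1 := by
    obtain ⟨e1, e2⟩ := hz l m hlm' (z l - z m - p) (by simp)
    rw [show z m - z l + p = -(z l - z m - p) from by ring]
    exact Rm_unit _ e1 e2 l m
  have hu2 : (Rm (z m - z l) l m : EndW N n) * Rm (z l - z m) l m = 1 := by
    obtain ⟨e1, e2⟩ := hz m l hml' (z m - z l) (by simp)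
    rw [show z l - z m = -(z m - z l) from by ring]
    exact Rm_unit _ e1 e2 l m
  -- conversion equations
  have eqAw : Kleft p (Function.update z m (z m + p)) l = Kleft (N := N) p z l := by
    simp only [Kleft]
    congr 1
    apply List.map_congr_left
    intro i hi
    have hil := memLo i hi
    rw [Function.update_of_ne (ne_of_lt (hil.trans hlm)), Function.update_of_ne hlm']
  have eqA : (Kleft (N := N) p z l)⁻¹ = MA p z l := by
    apply Matrix.inv_eq_right_inv
    simp only [Kleft, MA]
    apply prod_reverse_inv
    intro i hi
    have hil := memLo i hi
    obtain ⟨e1, e2⟩ := hz i l (ne_of_lt hil) (z i - z l - p) (by simp)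
    rw [show z l - z i + p = -(z i - z l - p) from by ring]
    exact Rm_unit _ e1 e2 i l
  have eqC : (Kleft (N := N) p z m)⁻¹
      = MC2 p z l m * (Rm (z m - z l + p) l m * MC1 p z l m) := by
    apply Matrix.inv_eq_right_inv
    have hr : (((((List.finRange n).filter (fun i => i < m)).reverse).map
          fun i => (Rm (z m - z i + p) i m : EndW N n)).prod)
        = MC2 p z l m * (Rm (z m - z l + p) l m * MC1 p z l m) := by
      rw [filter_lt_split l m hlm, List.reverse_append, List.reverse_cons,
        List.map_append, List.map_append, List.map_cons, List.map_nil,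
        List.prod_append, List.prod_append, List.prod_cons, List.prod_nil, mul_one,
        mul_assoc]
      rfl
    rw [Kleft, ← hr]
    apply prod_reverse_inv
    intro k hk
    have hkm : k < m := by simpa using (List.mem_filter.1 hk).2
    obtain ⟨e1, e2⟩ := hz k m (ne_of_lt hkm) (z k - z m - p) (by simp)
    rw [show z m - z k + p = -(z k - z m - p) from by ring]
    exact Rm_unit _ e1 e2 k m
  have eqCv : (Kleft (N := N) p (Function.update z l (z l + p)) m)⁻¹
      = MC2 p z l m * (Rm (z m - z l) l m * MC1 p z l m) := by
    apply Matrix.inv_eq_right_inv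
    have hr : (((((List.finRange n).filter (fun i => i < m)).reverse).map
          fun i => (Rm (Function.update z l (z l + p) m - Function.update z l (z l + p) i + p)
            i m : EndW N n)).prod)
        = MC2 p z l m * (Rm (z m - z l) l m * MC1 p z l m) := by
      rw [filter_lt_split l m hlm, List.reverse_append, List.reverse_cons,
        List.map_append, List.map_append, List.map_cons, List.map_nil,
        List.prod_append, List.prod_append, List.prod_cons, List.prod_nil, mul_one,
        mul_assoc, MC2, MC1]
      congr 1
      · congr 1
        apply List.map_congr_left
        intro k hk
        obtain ⟨h1k, h2k⟩ := memMid k (List.mem_reverse.1 hk)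
        rw [Function.update_of_ne hml', Function.update_of_ne (ne_of_gt h1k)]
      congr 1
      · rw [show Function.update z l (z l + p) m - Function.update z l (z l + p) l + p
            = z m - z l from by
          rw [Function.update_self, Function.update_of_ne hml']; ring]
      · congr 1
        apply List.map_congr_left
        intro i hi
        have hil := memLo i (List.mem_reverse.1 hi)
        rw [Function.update_of_ne hml', Function.update_of_ne (ne_of_lt hil)]
    rw [Kleft, ← hr]
    apply prod_reverse_inv
    intro k hk
    have hkm : k < m := by simpa using (List.mem_filter.1 hk).2
    have hne : Function.update z l (z l + p) k - Function.update z l (z l + p) m - p ≠ 1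
        ∧ Function.update z l (z l + p) k - Function.update z l (z l + p) m - p ≠ -1 := by
      by_cases hkl : k = l
      · subst hkl
        rw [Function.update_self, Function.update_of_ne hml',
          show z k + p - z m - p = z k - z m from by ring]
        exact hz k m (ne_of_lt hkm) (z k - z m) (by simp)
      · rw [Function.update_of_ne hkl, Function.update_of_ne hml']
        exact hz k m (ne_of_lt hkm) (z k - z m - p) (by simp)
    obtain ⟨e1, e2⟩ := hne
    rw [show Function.update z l (z l + p) m - Function.update z l (z l + p) k + p
        = -(Function.update z l (z l + p) k - Function.update z l (z l + p) m - p)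
        from by ring]
    exact Rm_unit _ e1 e2 k m
  have eqB : Kright (Function.update z m (z m + p)) l
      = MB2 z l m * ((Rm (z l - z m - p) l m : EndW N n) * MB1 z l m) := by
    rw [Kright, filter_gt_split l m hlm, List.reverse_append, List.reverse_cons,
      List.map_append, List.map_append, List.map_cons, List.map_nil,
      List.prod_append, List.prod_append, List.prod_cons, List.prod_nil, mul_one,
      mul_assoc, MB2, MB1]
    congr 1
    · congr 1
      apply List.map_congr_left
      intro j hj
      have hmj := memHi j (List.mem_reverse.1 hj)
      rw [Function.update_of_ne hlm', Function.update_of_ne (ne_of_gt hmj)]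
    congr 1
    · rw [show Function.update z m (z m + p) l - Function.update z m (z m + p) m
          = z l - z m - p from by
        rw [Function.update_self, Function.update_of_ne hlm']; ring]
    · congr 1
      apply List.map_congr_left
      intro k hk
      obtain ⟨h1k, h2k⟩ := memMid k (List.mem_reverse.1 hk)
      rw [Function.update_of_ne hlm', Function.update_of_ne (ne_of_lt h2k)]
  have eqB' : Kright z l
      = MB2 z l m * ((Rm (z l - z m) l m : EndW N n) * MB1 z l m) := by
    rw [Kright, filter_gt_split l m hlm, List.reverse_append, List.reverse_cons,
      List.map_append, List.map_append, List.map_cons, List.map_nil,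
      List.prod_append, List.prod_append, List.prod_cons, List.prod_nil, mul_one,
      mul_assoc]
    rfl
  have eqD : Kright z m = MD (N := N) z m := rfl
  have eqDv : Kright (Function.update z l (z l + p)) m = MD (N := N) z m := by
    rw [Kright, MD]
    congr 1
    apply List.map_congr_left
    intro j hj
    have hmj := memHi j (List.mem_reverse.1 hj)
    rw [Function.update_of_ne hml', Function.update_of_ne (ne_of_gt (hlm.trans hmj))]
  -- commutation facts
  have c1 : MB2 z l m * MC2 p z l m = MC2 p z l m * MB2 (N := N) z l m := by
    simp only [MB2, MC2]
    apply prod_comm_prod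
    intro a ha b hb
    have hma := memHi a (List.mem_reverse.1 ha)
    obtain ⟨h1b, h2b⟩ := memMid b (List.mem_reverse.1 hb)
    exact Rm_comm_Rm _ _ (ne_of_lt h1b) hlm' (ne_of_gt (h2b.trans hma)) (ne_of_gt hma)
  have c2 : LamD lam l * MC2 p z l m = MC2 p z l m * LamD (N := N) lam l := by
    simp only [MC2]
    refine (commute_prod _ _ _ ?_).eq
    intro k hk
    obtain ⟨h1k, h2k⟩ := memMid k (List.mem_reverse.1 hk)
    exact LamD_comm_Rm lam l _ _ _ (ne_of_lt h1k) hlm'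
  have c3 : MA p z l * MC2 p z l m = MC2 p z l m * MA (N := N) p z l := by
    simp only [MA, MC2]
    apply prod_comm_prod
    intro a ha b hb
    have hal := memLo a (List.mem_reverse.1 ha)
    obtain ⟨h1b, h2b⟩ := memMid b (List.mem_reverse.1 hb)
    exact Rm_comm_Rm _ _ (ne_of_lt (hal.trans h1b)) (ne_of_lt (hal.trans hlm))
      (ne_of_lt h1b) hlm'
  have c4 : MB1 z l m * MC1 p z l m = MC1 p z l m * MB1 (N := N) z l m := by
    simp only [MB1, MC1]
    apply prod_comm_prod
    intro a ha b hb
    obtain ⟨h1a, h2a⟩ := memMid a (List.mem_reverse.1 ha)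
    have hbl := memLo b (List.mem_reverse.1 hb)
    exact Rm_comm_Rm _ _ (ne_of_gt hbl) hlm' (ne_of_gt (hbl.trans h1a)) (ne_of_lt h2a)
  have c5 : MB2 z l m * MC1 p z l m = MC1 p z l m * MB2 (N := N) z l m := by
    simp only [MB2, MC1]
    apply prod_comm_prod
    intro a ha b hb
    have hma := memHi a (List.mem_reverse.1 ha)
    have hbl := memLo b (List.mem_reverse.1 hb)
    exact Rm_comm_Rm _ _ (ne_of_gt hbl) hlm'
      (ne_of_gt ((hbl.trans hlm).trans hma)) (ne_of_gt hma)
  have c6 : LamD lam l * MC1 p z l m = MC1 p z l m * LamD (N := N) lam l := by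
    simp only [MC1]
    refine (commute_prod _ _ _ ?_).eq
    intro i hi
    have hil := memLo i (List.mem_reverse.1 hi)
    exact LamD_comm_Rm lam l _ _ _ (ne_of_gt hil) hlm'
  have c7 : MB2 z l m * LamD lam m = LamD lam m * MB2 (N := N) z l m := by
    simp only [MB2]
    refine ((commute_prod _ _ _ ?_).eq).symm
    intro j hj
    have hmj := memHi j (List.mem_reverse.1 hj)
    exact LamD_comm_Rm lam m _ _ _ hml' (ne_of_lt hmj)
  have c8 : MB1 z l m * LamD lam m = LamD lam m * MB1 (N := N) z l m := by
    simp only [MB1]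
    refine ((commute_prod _ _ _ ?_).eq).symm
    intro k hk
    obtain ⟨h1k, h2k⟩ := memMid k (List.mem_reverse.1 hk)
    exact LamD_comm_Rm lam m _ _ _ hml' (ne_of_gt h2k)
  have c9 : LamD lam l * LamD lam m = LamD lam m * LamD (N := N) lam l := by
    simp only [LamD, Matrix.diagonal_mul_diagonal]
    exact congrArg Matrix.diagonal (funext fun k => mul_comm _ _)
  have c10 : MD z m * MA p z l = MA p z l * MD (N := N) z m := by
    simp only [MD, MA]
    apply prod_comm_prod
    intro a ha b hb
    have hma := memHi a (List.mem_reverse.1 ha)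
    have hbl := memLo b (List.mem_reverse.1 hb)
    exact Rm_comm_Rm _ _ (ne_of_gt (hbl.trans hlm)) hml'
      (ne_of_gt ((hbl.trans hlm).trans hma)) (ne_of_gt (hlm.trans hma))
  have c11 : LamD lam m * MA p z l = MA p z l * LamD (N := N) lam m := by
    simp only [MA]
    refine (commute_prod _ _ _ ?_).eq
    intro i hi
    have hil := memLo i (List.mem_reverse.1 hi)
    exact LamD_comm_Rm lam m _ _ _ (ne_of_gt (hil.trans hlm)) hml'
  have c12 : MD z m * LamD lam l = LamD lam l * MD (N := N) z m := by
    simp only [MD]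
    refine ((commute_prod _ _ _ ?_).eq).symm
    intro j hj
    have hmj := memHi j (List.mem_reverse.1 hj)
    exact LamD_comm_Rm lam l _ _ _ hlm' (ne_of_lt (hlm.trans hmj))
  have c13 : LamD lam m * LamD lam l * Rm (z l - z m) l m
      = Rm (z l - z m) l m * (LamD lam m * LamD (N := N) lam l) := by
    rw [← c9]
    exact (LamD_mul_comm_Rm lam (z l - z m) l m).eq
  have c14 : MD z m * MB1 z l m = MB1 z l m * MD (N := N) z m := by
    simp only [MD, MB1]
    apply prod_comm_prod
    intro a ha b hb
    have hma := memHi a (List.mem_reverse.1 ha)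
    obtain ⟨h1b, h2b⟩ := memMid b (List.mem_reverse.1 hb)
    exact Rm_comm_Rm _ _ hml' (ne_of_gt h2b) (ne_of_gt (hlm.trans hma))
      (ne_of_gt (h2b.trans hma))
  -- zipper identities
  have hz1 : MB1 z l m * MC2 p z l m * Rm (z m - z l + p) l m
      = Rm (z m - z l + p) l m * (MC2 p z l m * MB1 (N := N) z l m) := by
    simp only [MB1, MC2]
    rw [interleave _ ndMidR (fun k => (Rm (z l - z k) l k : EndW N n))
        (fun k => Rm (z m - z k + p) k m) ?hc1,
      interleave _ ndMidR (fun k => (Rm (z m - z k + p) k m : EndW N n))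
        (fun k => Rm (z l - z k) l k) ?hc2]
    case hc1 =>
      intro a ha b hb hab
      obtain ⟨h1a, h2a⟩ := memMid a (List.mem_reverse.1 ha)
      obtain ⟨h1b, h2b⟩ := memMid b (List.mem_reverse.1 hb)
      exact Rm_comm_Rm _ _ (ne_of_lt h1b) hlm' hab (ne_of_lt h2a)
    case hc2 =>
      intro a ha b hb hab
      obtain ⟨h1a, h2a⟩ := memMid a (List.mem_reverse.1 ha)
      obtain ⟨h1b, h2b⟩ := memMid b (List.mem_reverse.1 hb)
      exact Rm_comm_Rm _ _ (ne_of_gt h1a) hab hml' (ne_of_gt h2b)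
    apply zipper
    intro k hk
    obtain ⟨h1k, h2k⟩ := memMid k (List.mem_reverse.1 hk)
    have Y := YBE (N := N) (z m - z l + p) (z l - z k) hml' (ne_of_gt h2k) (ne_of_lt h1k)
    rw [Rm_symm (z m - z k + p) k m, Rm_symm (z m - z l + p) l m,
      show z m - z k + p = (z m - z l + p) + (z l - z k) from by ring, ← Y, mul_assoc]
  have hz2 : MD z m * MB2 z l m * Rm (z l - z m) l m
      = Rm (z l - z m) l m * (MB2 z l m * MD (N := N) z m) := by
    simp only [MD, MB2]
    rw [interleave _ ndHiR (fun j => (Rm (z m - z j) m j : EndW N n))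
        (fun j => Rm (z l - z j) l j) ?hc1,
      interleave _ ndHiR (fun j => (Rm (z l - z j) l j : EndW N n))
        (fun j => Rm (z m - z j) m j) ?hc2]
    case hc1 =>
      intro a ha b hb hab
      have hma := memHi a (List.mem_reverse.1 ha)
      have hmb := memHi b (List.mem_reverse.1 hb)
      exact Rm_comm_Rm _ _ hml' (ne_of_lt hmb) (ne_of_gt (hlm.trans hma)) hab
    case hc2 =>
      intro a ha b hb hab
      have hma := memHi a (List.mem_reverse.1 ha)
      have hmb := memHi b (List.mem_reverse.1 hb)
      exact Rm_comm_Rm _ _ hlm' (ne_of_lt (hlm.trans hmb)) (ne_of_gt hma) hab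
    apply zipper
    intro j hj
    have hmj := memHi j (List.mem_reverse.1 hj)
    have Y := YBE (N := N) (z l - z m) (z m - z j) hlm' (ne_of_lt (hlm.trans hmj))
      (ne_of_lt hmj)
    rw [show z l - z j = (z l - z m) + (z m - z j) from by ring, ← Y, mul_assoc]
  have hz3 : Rm (z m - z l) l m * (MC1 p z l m * MA p z l)
      = MA p z l * MC1 p z l m * Rm (N := N) (z m - z l) l m := by
    simp only [MC1, MA]
    rw [interleave _ ndLoR (fun i => (Rm (z m - z i + p) i m : EndW N n))
        (fun i => Rm (z l - z i + p) i l) ?hc1,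
      interleave _ ndLoR (fun i => (Rm (z l - z i + p) i l : EndW N n))
        (fun i => Rm (z m - z i + p) i m) ?hc2]
    case hc1 =>
      intro a ha b hb hab
      have hal := memLo a (List.mem_reverse.1 ha)
      have hbl := memLo b (List.mem_reverse.1 hb)
      exact Rm_comm_Rm _ _ hab (ne_of_lt hal) (Ne.symm (ne_of_lt (hbl.trans hlm))) hml'
    case hc2 =>
      intro a ha b hb hab
      have hal := memLo a (List.mem_reverse.1 ha)
      have hbl := memLo b (List.mem_reverse.1 hb)
      exact Rm_comm_Rm _ _ hab (ne_of_lt (hal.trans hlm)) (ne_of_gt hbl) hlm'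
    refine (zipper _ _ _ _ ?_).symm
    intro i hi
    have hil := memLo i (List.mem_reverse.1 hi)
    have Y := YBE (N := N) (z m - z l) (z l - z i + p) hml'
      (Ne.symm (ne_of_lt (hil.trans hlm))) (ne_of_gt hil)
    rw [Rm_symm (z l - z i + p) i l, Rm_symm (z m - z i + p) i m, Rm_symm (z m - z l) l m,
      show z m - z i + p = (z m - z l) + (z l - z i + p) from by ring, ← Y, mul_assoc]
  -- assembly
  simp only [Kqkz]
  rw [eqAw, eqA, eqB, eqB', eqC, eqCv, eqD, eqDv]
  simp only [mul_assoc]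
  exact rearrange _ _ _ _ _ _ _ _ _ _ _ _ hz1 hz2 hz3 hu1 hu2
    c1 c2 c3 c4 c5 c6 c7 c8 c9 c10 c11 c12 c13 c14

end Aux

/-- The qKZ operators pairwise commute (Frenkel–Reshetikhin, for tensor products of
vector representations of `gl_N`):
`K_l(z_1,…,z_m+p,…,z_n;λ) K_m(z;λ) = K_m(z_1,…,z_l+p,…,z_n;λ) K_l(z;λ)`. -/
theorem qKZ_operators_commute {N n : ℕ}
    (p : ℂ) (hp : p ≠ 0)
    (lam : Fin N → ℂ) (hlam0 : ∀ a, lam a ≠ 0) (hlam : Function.Injective lam)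
    (z : Fin n → ℂ) (hz : ZGeneric p z)
    (l m : Fin n) :
    Kqkz p (Function.update z m (z m + p)) lam l * Kqkz p z lam m
      = Kqkz p (Function.update z l (z l + p)) lam m * Kqkz p z lam l := by
  rcases lt_trichotomy l m with h | rfl | h
  · exact key p lam z hz l m h
  · rfl
  · exact (key p lam z hz m l h).symm
end
end
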